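/- arXiv:1806.00998 — 4 statements merged into one kernel-verified Lean document; each statement's English description precedes it below -/
import Mathlib

section
/- For any string of positive real numbers ρ = (ρ_1, ..., ρ_K) and any real λ > 0, the number of tuples (n_1, ..., n_K) of natural numbers satisfying n_1 ρ_1 + ... + n_K ρ_K ≤ λ is at most (λ + ρ_1 + ... + ρ_K)^K / (K! · ρ_1 ⋯ ρ_K). -/
/-!
Induct on `K`, splitting off the first coordinate `m = n₀`: the points with `n₀ = m` are the
lattice points of the `(K-1)`-dimensional problem with budget `λ - m ρ₀`. By induction the count
is at most `∑ₘ (λ - m ρ₀ + ρ₁ + ⋯ + ρ_{K-1})^(K-1) / ((K-1)! ρ₁ ⋯ ρ_{K-1})`, and this sum is a lower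
Riemann sum for `∫₀^{λ + ρ₀ + ⋯} x^(K-1) dx / ρ₀`, which gives the bound.
-/

open Finset

abbrev SimplexLatticePoints {K : ℕ} (ρ : Fin K → ℝ) (lam : ℝ) : Type :=
  {n : Fin K → ℕ // ∑ i, (n i : ℝ) * ρ i ≤ lam}

lemma pow_succ_add_mul_pow_le_add_pow {b r : ℝ} (hb : 0 ≤ b) (hr : 0 ≤ r) (K : ℕ) :
    b ^ (K + 1) + (K + 1) * r * b ^ K ≤ (b + r) ^ (K + 1) := by
  induction K with
  | zero => simp
  | succ K ih =>
    have hrb : 0 ≤ (K + 1) * r ^ 2 * b ^ K := by positivity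
    calc b ^ (K + 2) + ((K + 1 : ℕ) + 1) * r * b ^ (K + 1)
        ≤ (b + r) * (b ^ (K + 1) + (K + 1) * r * b ^ K) := by
          push_cast; ring_nf; linarith
      _ ≤ (b + r) * (b + r) ^ (K + 1) := by gcongr
      _ = (b + r) ^ (K + 2) := by ring

/-- The left Riemann sum of `x ↦ (K + 1) x ^ K` on `[c - N r, c]` underestimates its integral. -/
lemma mul_sum_range_pow_le {r : ℝ} (hr : 0 ≤ r) (K : ℕ) :
    ∀ (N : ℕ) (c : ℝ), N * r ≤ c →
      (K + 1) * r * ∑ m ∈ range N, (c - (m + 1) * r) ^ K ≤ c ^ (K + 1)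
  | 0, c, hc => by
    have : 0 ≤ c := by simpa using hc
    simpa using pow_nonneg this (K + 1)
  | N + 1, c, hc => by
    have hcr : N * r ≤ c - r := by push_cast at hc; linarith
    have ih := mul_sum_range_pow_le hr K N (c - r) hcr
    have key := pow_succ_add_mul_pow_le_add_pow
      ((mul_nonneg N.cast_nonneg hr).trans hcr) hr K
    rw [sub_add_cancel] at key
    calc (K + 1) * r * ∑ m ∈ range (N + 1), (c - (m + 1) * r) ^ K
        = (K + 1) * r * ∑ m ∈ range N, (c - r - (m + 1) * r) ^ K + (K + 1) * r * (c - r) ^ K := by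
          rw [sum_range_succ', mul_add]; push_cast; ring_nf
      _ ≤ c ^ (K + 1) := by linarith

namespace SimplexLatticePoints

variable {K : ℕ}

lemma lam_nonneg {ρ : Fin K → ℝ} (hρ : ∀ i, 0 ≤ ρ i) {lam : ℝ} (n : SimplexLatticePoints ρ lam) :
    0 ≤ lam :=
  (sum_nonneg fun i _ => mul_nonneg (Nat.cast_nonneg _) (hρ i)).trans n.2

def consEquiv (ρ : Fin (K + 1) → ℝ) (lam : ℝ) :
    SimplexLatticePoints ρ lam ≃ Σ m : ℕ, SimplexLatticePoints (Fin.tail ρ) (lam - m * ρ 0) :=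
  ((Fin.consEquiv fun _ => ℕ).symm.subtypeEquiv fun n => by
      simp only [Fin.sum_univ_succ, Fin.consEquiv, Equiv.coe_fn_symm_mk, Fin.tail]
      constructor <;> intro h <;> linarith).trans
    (Equiv.subtypeProdEquivSigmaSubtype fun (m : ℕ) (n' : Fin K → ℕ) =>
      ∑ i, (n' i : ℝ) * Fin.tail ρ i ≤ lam - m * ρ 0)

def consEquivRange {ρ : Fin (K + 1) → ℝ} (hρ : ∀ i, 0 < ρ i) (lam : ℝ) :
    SimplexLatticePoints ρ lam ≃ Σ m : range (⌊lam / ρ 0⌋₊ + 1),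
      SimplexLatticePoints (Fin.tail ρ) (lam - m * ρ 0) :=
  (consEquiv ρ lam).trans (Equiv.sigmaSubtypeEquivOfSubset _ _ fun m n' => by
    have := n'.lam_nonneg fun i => (hρ i.succ).le
    rw [mem_range, Nat.lt_succ_iff]
    exact Nat.le_floor <| (le_div_iff₀ (hρ 0)).2 (by linarith)).symm

lemma finite {ρ : Fin K → ℝ} (hρ : ∀ i, 0 < ρ i) (lam : ℝ) :
    Finite (SimplexLatticePoints ρ lam) := by
  induction K generalizing lam with
  | zero => infer_instance
  | succ K ih =>
    have := fun m : ℕ => ih (ρ := Fin.tail ρ) (fun i => hρ i.succ) (lam - m * ρ 0)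
    exact Finite.of_equiv _ (consEquivRange hρ lam).symm

lemma card_eq_sum_range {ρ : Fin (K + 1) → ℝ} (hρ : ∀ i, 0 < ρ i) (lam : ℝ) :
    Nat.card (SimplexLatticePoints ρ lam) = ∑ m ∈ range (⌊lam / ρ 0⌋₊ + 1),
      Nat.card (SimplexLatticePoints (Fin.tail ρ) (lam - m * ρ 0)) := by
  have := fun m : ℕ => finite (ρ := Fin.tail ρ) (fun i => hρ i.succ) (lam - m * ρ 0)
  rw [Nat.card_congr (consEquivRange hρ lam), Nat.card_sigma,
    sum_coe_sort (range _) fun m => Nat.card (SimplexLatticePoints (Fin.tail ρ) (lam - m * ρ 0))]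

theorem card_le {ρ : Fin K → ℝ} (hρ : ∀ i, 0 < ρ i) {lam : ℝ} (hlam : 0 ≤ lam) :
    (Nat.card (SimplexLatticePoints ρ lam) : ℝ) ≤
      (lam + ∑ i, ρ i) ^ K / ((K.factorial : ℝ) * ∏ i, ρ i) := by
  induction K generalizing lam with
  | zero =>
    have : Unique (SimplexLatticePoints ρ lam) :=
      ⟨⟨⟨Fin.elim0, by simpa using hlam⟩⟩, fun n => Subtype.ext (funext fun i => i.elim0)⟩
    simp
  | succ K ih =>
    set M := ⌊lam / ρ 0⌋₊
    set S := ∑ i : Fin K, ρ i.succ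
    set P := ∏ i : Fin K, ρ i.succ
    have hS : 0 ≤ S := sum_nonneg fun i _ => (hρ i.succ).le
    have hP : 0 < P := prod_pos fun i _ => hρ i.succ
    have hρ₀ : 0 < (K + 1) * ρ 0 := mul_pos (by positivity) (hρ 0)
    have hMρ : M * ρ 0 ≤ lam :=
      (le_div_iff₀ (hρ 0)).1 (Nat.floor_le (div_nonneg hlam (hρ 0).le))
    have hrange : ∀ m ∈ range (M + 1), 0 ≤ lam - m * ρ 0 := fun m hm => by
      have : (m : ℝ) ≤ M := by exact_mod_cast Nat.lt_succ_iff.1 (mem_range.1 hm)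
      nlinarith [hρ 0]
    have riemann := mul_sum_range_pow_le (hρ 0).le K (M + 1) (lam + ρ 0 + S)
      (by push_cast; linarith)
    rw [card_eq_sum_range hρ, Nat.cast_sum]
    calc ∑ m ∈ range (M + 1), (Nat.card (SimplexLatticePoints (Fin.tail ρ) (lam - m * ρ 0)) : ℝ)
        ≤ ∑ m ∈ range (M + 1), (lam - m * ρ 0 + S) ^ K / (K.factorial * P) :=
          sum_le_sum fun m hm => ih (ρ := Fin.tail ρ) (fun i => hρ i.succ) (hrange m hm)
      _ = (K + 1) * ρ 0 * (∑ m ∈ range (M + 1), (lam + ρ 0 + S - (m + 1) * ρ 0) ^ K) /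
            ((K + 1) * ρ 0 * (K.factorial * P)) := by
          rw [← sum_div, mul_div_mul_left _ _ hρ₀.ne']
          congr 1
          exact sum_congr rfl fun m _ => by ring
      _ ≤ (lam + ρ 0 + S) ^ (K + 1) / ((K + 1) * ρ 0 * (K.factorial * P)) :=
          div_le_div_of_nonneg_right riemann (mul_pos hρ₀ (by positivity)).le
      _ = _ := by
          rw [Fin.sum_univ_succ, Fin.prod_univ_succ, Nat.factorial_succ]
          push_cast; ring

end SimplexLatticePoints

theorem combinatorial_lemma_real_general (K : ℕ) (ρ : Fin K → ℝ)
    (hρ : ∀ i, 0 < ρ i) (lam : ℝ) (hlam : 0 < lam) :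
    (Nat.card {n : Fin K → ℕ // ∑ i, (n i : ℝ) * ρ i ≤ lam} : ℝ) ≤
      (lam + ∑ i, ρ i) ^ K / ((K.factorial : ℝ) * ∏ i, ρ i) :=
  SimplexLatticePoints.card_le hρ hlam.le

theorem combinatorial_lemma_real (K : ℕ) (hK : 0 < K) (ρ : Fin K → ℝ)
    (hρ : ∀ i, 0 < ρ i) (lam : ℝ) (hlam : 0 < lam) :
    (Nat.card {n : Fin K → ℕ // ∑ i, (n i : ℝ) * ρ i ≤ lam} : ℝ) ≤
      (lam + ∑ i, ρ i) ^ K / ((K.factorial : ℝ) * ∏ i, ρ i) :=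
  combinatorial_lemma_real_general K ρ hρ lam hlam
end

section
/- Let α, γ be positive real constants with α > e^γ / γ^γ. Then the equation α t^γ = e^t has a solution t_2 > γ, and any solution t_2 > γ satisfies log(α γ^γ) < t_2 < 2 log(α γ^γ). -/
/-!
Taking logarithms, `α t ^ γ = e ^ t` becomes `f t = log α` for `f s = s - γ log s`, which is
strictly increasing on `[γ, ∞)`. Writing `L = log (α γ ^ γ) > γ`, one has
`f L < log α < f (2 L)`: the first because `log γ < log L`, the second because
`log (2 x) < x` for `x = L / γ`. The intermediate value theorem gives a root in `(L, 2 L)`,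
and monotonicity traps every root beyond `γ` there.
-/

open Real Set

lemma Real.log_two_mul_lt_self {x : ℝ} (hx : 0 < x) : log (2 * x) < x := by
  rw [log_mul two_ne_zero hx.ne']
  linarith [log_le_sub_one_of_pos hx, log_two_lt_d9]

lemma Real.mul_rpow_eq_exp_iff {α γ t : ℝ} (hα : 0 < α) (ht : 0 < t) :
    α * t ^ γ = exp t ↔ t - γ * log t = log α := by
  rw [rpow_def_of_pos ht, ← exp_log hα, ← exp_add, exp_eq_exp, log_exp]
  constructor <;> intro h <;> linarith

lemma Real.strictMonoOn_sub_mul_log {γ : ℝ} (hγ : 0 < γ) :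
    StrictMonoOn (fun s => s - γ * log s) (Ici γ) := by
  intro s (hs : γ ≤ s) u (_ : γ ≤ u) hsu
  have hs₀ : 0 < s := hγ.trans_le hs
  have hlog_nonneg : 0 ≤ log u - log s := sub_nonneg.2 (log_le_log hs₀ hsu.le)
  have hlog_lt : log u - log s < u / s - 1 := by
    rw [← log_div (by linarith) hs₀.ne']
    exact log_lt_sub_one_of_pos (div_pos (by linarith) hs₀)
      (by rw [Ne, div_eq_one_iff_eq hs₀.ne']; linarith)
  have key : γ * (log u - log s) < u - s :=
    calc γ * (log u - log s) ≤ s * (log u - log s) := by gcongr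
      _ < s * (u / s - 1) := by gcongr
      _ = u - s := by field_simp
  show s - γ * log s < u - γ * log u
  linarith

lemma Real.continuousOn_sub_mul_log (γ : ℝ) :
    ContinuousOn (fun s => s - γ * log s) (Ioi 0) :=
  continuousOn_id.sub (continuousOn_const.mul (continuousOn_log.mono fun _ hs => ne_of_gt hs))

theorem solution_bound (α γ : ℝ) (hα : 0 < α) (hγ : 0 < γ)
    (h : α > Real.exp γ / γ ^ γ) :
    (∃ t : ℝ, t > γ ∧ α * t ^ γ = Real.exp t) ∧
      ∀ t : ℝ, t > γ → α * t ^ γ = Real.exp t →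
        Real.log (α * γ ^ γ) < t ∧ t < 2 * Real.log (α * γ ^ γ) := by
  set L := log (α * γ ^ γ) with hL
  have hlogα : log α = L - γ * log γ := by
    rw [hL, log_mul hα.ne' (rpow_pos_of_pos hγ γ).ne', log_rpow hγ]; ring
  have hγL : γ < L := by
    rw [← log_exp γ]
    exact log_lt_log (exp_pos γ) ((div_lt_iff₀ (rpow_pos_of_pos hγ γ)).1 h)
  have hlow : L - γ * log L < log α := by
    linarith [mul_lt_mul_of_pos_left (log_lt_log hγ hγL) hγ]
  have hhigh : log α < 2 * L - γ * log (2 * L) := by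
    have := mul_lt_mul_of_pos_left (log_two_mul_lt_self (div_pos (hγ.trans hγL) hγ)) hγ
    rw [mul_div_cancel₀ _ hγ.ne', ← mul_div_assoc, log_div (by linarith) hγ.ne'] at this
    linarith
  have hmono := strictMonoOn_sub_mul_log hγ
  refine ⟨?_, fun t ht heq => ?_⟩
  · obtain ⟨t, ⟨hLt, -⟩, ht⟩ := intermediate_value_Ioo (by linarith)
      ((continuousOn_sub_mul_log γ).mono fun s hs => hγ.trans_le (hγL.le.trans hs.1)) ⟨hlow, hhigh⟩
    exact ⟨t, hγL.trans hLt, (mul_rpow_eq_exp_iff hα (hγ.trans (hγL.trans hLt))).2 ht⟩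
  · rw [mul_rpow_eq_exp_iff hα (hγ.trans ht)] at heq
    have ht' : t ∈ Ici γ := ht.le
    exact ⟨(hmono.lt_iff_lt hγL.le ht').1 (heq ▸ hlow),
      (hmono.lt_iff_lt ht' (show γ ≤ 2 * L by linarith)).1 (heq ▸ hhigh)⟩
end

section
/- Let ε be a real number with 0 < ε ≤ 1/3. Then the number ⌊π / arccot( cosh(ε) · (√(1 + 2 cosh ε) + √(2 + 2 cosh ε)) )⌋ equals 12, i.e., π / arccot(cosh(ε)·(√(1+2cosh ε)+√(2+2cosh ε))) lies in the interval [12, 13). -/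
/-!
With `c = cosh ε ∈ [1, 1.058]`, the quantity `x = c (√(1 + 2c) + √(2 + 2c))` is increasing in `c`,
so `2 + √3 ≤ x < 4.016`. As `tan (π / 12) = 2 - √3` and `tan (π / 13) < 0.249 < 1 / 4.016`,
the angle `arctan (1 / x)` lies in `(π / 13, π / 12]`, whence `⌊π / arctan (1 / x)⌋ = 12`.
-/

open Real

theorem Int.floor_div_eq_of_div_succ_lt_of_le {K : Type*} [Field K] [LinearOrder K]
    [IsStrictOrderedRing K] [FloorRing K] {a b : K} {n : ℕ} (hn : 0 < n)
    (h₁ : b / (n + 1) < a) (h₂ : a ≤ b / n) : ⌊b / a⌋ = n := by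
  have hn' : (0 : K) < n := Nat.cast_pos.2 hn
  have hb : 0 < b := by
    have h := h₁.trans_le h₂
    rw [div_lt_div_iff₀ (by positivity) hn'] at h
    linarith
  have ha : 0 < a := h₁.trans_le' (by positivity)
  rw [Int.floor_eq_iff]
  push_cast
  constructor
  · rwa [le_div_iff₀ ha, ← le_div_iff₀' hn']
  · rwa [div_lt_iff₀ ha, ← div_lt_iff₀' (by positivity)]

namespace Real

theorem arctan_two_sub_sqrt_three : arctan (2 - √3) = π / 12 := by
  have h3 : √3 ^ 2 = 3 := sq_sqrt (by norm_num)
  have h3' : 0 < √3 := by positivity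
  have hsq : (2 - √3) * (2 - √3) < 1 := by nlinarith
  have hdouble : ((2 - √3) + (2 - √3)) / (1 - (2 - √3) * (2 - √3)) = (√3)⁻¹ := by
    rw [div_eq_iff (by nlinarith)]
    field_simp
    nlinarith
  have := arctan_add hsq
  rw [hdouble, arctan_inv_sqrt_three] at this
  linarith

theorem tan_lt_div_one_sub_sq_div_two {x : ℝ} (hx : 0 < x) (hx2 : x ^ 2 < 2) :
    tan x < x / (1 - x ^ 2 / 2) := by
  have hden : 0 < 1 - x ^ 2 / 2 := by linarith
  have hcos : 1 - x ^ 2 / 2 < cos x := one_sub_sq_div_two_lt_cos hx.ne'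
  rw [tan_eq_sin_div_cos, div_lt_div_iff₀ (hden.trans hcos) hden]
  rcases le_or_gt 0 (sin x) with hs | hs
  · calc sin x * (1 - x ^ 2 / 2) ≤ sin x * cos x := by gcongr
      _ < x * cos x := by gcongr; exacts [hden.trans hcos, sin_lt hx]
  · nlinarith

theorem cosh_one_third_lt : cosh (1 / 3) < 1.058 := by
  have h := exp_bound' (x := (1 / 3) ^ 2 / 2) (by norm_num) (by norm_num) (n := 2) (by norm_num)
  norm_num [Finset.sum_range_succ] at h
  linarith [cosh_le_exp_half_sq (1 / 3)]

theorem tan_pi_div_thirteen_lt : tan (π / 13) < 0.249 := by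
  have hx : 0 < π / 13 := by positivity
  have hx' : π / 13 < 0.24167 := by linarith [pi_lt_d4]
  have hden : 0 < 1 - (π / 13) ^ 2 / 2 := by nlinarith
  calc tan (π / 13) < π / 13 / (1 - (π / 13) ^ 2 / 2) :=
        tan_lt_div_one_sub_sq_div_two hx (by nlinarith)
    _ < 0.249 := by rw [div_lt_iff₀ hden]; nlinarith

end Real

-- In the paper's notation, `voronoiCot (cosh ε) = cot (φ_ε / 2)`.
noncomputable def voronoiCot (c : ℝ) : ℝ := c * (√(1 + 2 * c) + √(2 + 2 * c))

theorem monotoneOn_voronoiCot : MonotoneOn voronoiCot (Set.Ici 0) := by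
  intro c (hc : 0 ≤ c) d _ hcd
  unfold voronoiCot
  gcongr

theorem voronoiCot_one : voronoiCot 1 = 2 + √3 := by
  have h4 : √4 = 2 := by rw [show (4 : ℝ) = 2 ^ 2 by norm_num, sqrt_sq zero_le_two]
  norm_num [voronoiCot, h4, add_comm]

theorem two_add_sqrt_three_le_voronoiCot {c : ℝ} (hc : 1 ≤ c) : 2 + √3 ≤ voronoiCot c :=
  voronoiCot_one ▸ monotoneOn_voronoiCot (Set.mem_Ici.2 zero_le_one) (zero_le_one.trans hc) hc

theorem voronoiCot_lt {c : ℝ} (hc₀ : 0 ≤ c) (hc : c ≤ 1.058) : voronoiCot c < 4.016 := by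
  have h₁ : √(1 + 2 * 1.058) < 1.7653 := by rw [sqrt_lt' (by norm_num)]; norm_num
  have h₂ : √(2 + 2 * 1.058) < 2.0288 := by rw [sqrt_lt' (by norm_num)]; norm_num
  refine (monotoneOn_voronoiCot hc₀ (by norm_num) hc).trans_lt ?_
  unfold voronoiCot
  nlinarith

theorem arctan_one_div_le_pi_div_twelve {x : ℝ} (hx : 2 + √3 ≤ x) : arctan (1 / x) ≤ π / 12 := by
  have h3 : √3 ^ 2 = 3 := sq_sqrt (by norm_num)
  have hx₀ : 0 < x := lt_of_lt_of_le (by positivity) hx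
  rw [← arctan_two_sub_sqrt_three, arctan_le_arctan_iff, div_le_iff₀ hx₀]
  nlinarith [sqrt_nonneg 3]

theorem pi_div_thirteen_lt_arctan_one_div {x : ℝ} (hx₀ : 0 < x) (hx : x < 4.016) :
    π / 13 < arctan (1 / x) := by
  have hπ := pi_pos
  rw [← arctan_tan (x := π / 13) (by linarith) (by linarith), arctan_lt_arctan_iff]
  refine tan_pi_div_thirteen_lt.trans ?_
  rw [lt_div_iff₀ hx₀]
  linarith

theorem voronoi_angle_count (ε : ℝ) (hε0 : 0 < ε) (hε : ε ≤ 1 / 3) :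
    ⌊π / Real.arctan (1 / (Real.cosh ε *
      (Real.sqrt (1 + 2 * Real.cosh ε) + Real.sqrt (2 + 2 * Real.cosh ε))))⌋ = 12 := by
  have hc : cosh ε ≤ 1.058 :=
    (cosh_le_cosh.2 (by rw [abs_of_pos hε0, abs_of_pos (by norm_num)]; exact hε)).trans
      cosh_one_third_lt.le
  have hlow := two_add_sqrt_three_le_voronoiCot (one_le_cosh ε)
  have hup := voronoiCot_lt (cosh_pos ε).le hc
  exact Int.floor_div_eq_of_div_succ_lt_of_le (n := 12) (by norm_num)
    (by exact_mod_cast pi_div_thirteen_lt_arctan_one_div (lt_of_lt_of_le (by positivity) hlow) hup)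
    (by exact_mod_cast arctan_one_div_le_pi_div_twelve hlow)
end

section
/- For real R' > 0 and ω > 0 with cosh(ω) ≤ cosh(R'/2), setting sin θ = (tanh ω / tanh(R'/2)) · (1/cosh ω) · (1 − √(1 − cosh²ω/cosh²(R'/2))) with θ ∈ (0, π/2), one has θ < π sinh(ω)/sinh(R'). -/
open Real

/-! Since `1 - √(1 - x) ≤ x` for `x ≥ 0`, the defining formula gives
`sin θ ≤ (tanh ω / tanh (R'/2)) · cosh ω / cosh² (R'/2) = 2 sinh ω / sinh R'`,
and Jordan's inequality `(2/π) θ < sin θ` on `(0, π/2)` turns this into the bound on `θ`. -/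

lemma one_sub_sqrt_one_sub_le {x : ℝ} (hx : 0 ≤ x) : 1 - √(1 - x) ≤ x := by
  rcases le_or_gt x 1 with hx1 | hx1
  · have : 1 - x ≤ √(1 - x) := le_sqrt_self_iff.2 (by linarith)
    linarith
  · rw [sqrt_eq_zero_of_nonpos (by linarith)]
    linarith

lemma Real.tanh_nonneg {x : ℝ} (hx : 0 ≤ x) : 0 ≤ tanh x := by
  rw [tanh_eq_sinh_div_cosh]
  exact div_nonneg (sinh_nonneg_iff.2 hx) (cosh_pos x).le

lemma tanh_div_tanh_half_mul_cosh_sq_div (ω R : ℝ) :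
    tanh ω / tanh (R / 2) * (1 / cosh ω) * (cosh ω ^ 2 / cosh (R / 2) ^ 2)
      = 2 * sinh ω / sinh R := by
  have hR : sinh R = 2 * sinh (R / 2) * cosh (R / 2) := by
    rw [← sinh_two_mul, mul_div_cancel₀ R two_ne_zero]
  have := cosh_pos ω
  have := cosh_pos (R / 2)
  rw [hR, tanh_eq_sinh_div_cosh, tanh_eq_sinh_div_cosh]
  field_simp

lemma lt_pi_div_two_mul_of_sin_le {θ c : ℝ} (hθ0 : 0 < θ) (hθ1 : θ < π / 2) (h : sin θ ≤ c) :
    θ < π / 2 * c := by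
  have := pi_pos
  calc θ = π / 2 * (2 / π * θ) := by field_simp
    _ < π / 2 * c := by gcongr; exact (mul_lt_sin hθ0 hθ1).trans_le h

theorem theta_bound_general (R' ω θ : ℝ) (hR' : 0 < R') (hω : 0 < ω)
    (hθ0 : 0 < θ) (hθ1 : θ < π / 2)
    (hsin : Real.sin θ = (Real.tanh ω / Real.tanh (R' / 2)) * (1 / Real.cosh ω) *
      (1 - Real.sqrt (1 - Real.cosh ω ^ 2 / Real.cosh (R' / 2) ^ 2))) :
    θ < π * Real.sinh ω / Real.sinh R' := by
  have hcoef : 0 ≤ tanh ω / tanh (R' / 2) * (1 / cosh ω) := by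
    have := cosh_pos ω
    have := tanh_nonneg hω.le
    have := tanh_nonneg (half_pos hR').le
    positivity
  have hsin_le : sin θ ≤ 2 * sinh ω / sinh R' := by
    rw [hsin, ← tanh_div_tanh_half_mul_cosh_sq_div]
    exact mul_le_mul_of_nonneg_left (one_sub_sqrt_one_sub_le (by positivity)) hcoef
  calc θ < π / 2 * (2 * sinh ω / sinh R') := lt_pi_div_two_mul_of_sin_le hθ0 hθ1 hsin_le
    _ = π * sinh ω / sinh R' := by ring

theorem theta_bound (R' ω θ : ℝ) (hR' : 0 < R') (hω : 0 < ω)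
    (hcosh : Real.cosh ω ≤ Real.cosh (R' / 2))
    (hθ0 : 0 < θ) (hθ1 : θ < π / 2)
    (hsin : Real.sin θ = (Real.tanh ω / Real.tanh (R' / 2)) * (1 / Real.cosh ω) *
      (1 - Real.sqrt (1 - Real.cosh ω ^ 2 / Real.cosh (R' / 2) ^ 2))) :
    θ < π * Real.sinh ω / Real.sinh R' :=
  theta_bound_general R' ω θ hR' hω hθ0 hθ1 hsin
end
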